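/- arXiv:1604.05424 — 2 statements merged into one kernel-verified Lean document; each statement's English description precedes it below -/
import Mathlib

section
/- Let a torsion-free affine connection on an open set U ⊆ ℝⁿ be given by smooth Christoffel symbols, let p ∈ U, and suppose the connection is affine Szabó at p, i.e. the characteristic polynomial of the affine Szabó operator S(X) equals λⁿ for every X ∈ ℝⁿ. Then the Ricci tensor of the connection is cyclic parallel at p, i.e. (∇ᵢRic)ⱼₖ + (∇ⱼRic)ₖᵢ + (∇ₖRic)ᵢⱼ = 0 at p for all indices i, j, k. -/
open scoped BigOperators

noncomputable section

variable {ι : Type} [Fintype ι] [DecidableEq ι]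

/-- Partial derivative in the `i`-th coordinate direction. -/
def pd (i : ι) (f : (ι → ℝ) → ℝ) : (ι → ℝ) → ℝ :=
  fun p => fderiv ℝ f p (Pi.single i 1)

/-- Curvature components `R^l_{ijk}` of the torsion-free connection with Christoffel
symbols `Γ k i j = Γᵏᵢⱼ`:
`Rˡᵢⱼₖ = ∂ᵢΓˡⱼₖ − ∂ⱼΓˡᵢₖ + Σₘ (Γˡᵢₘ Γᵐⱼₖ − Γˡⱼₘ Γᵐᵢₖ)`. -/
def curv (Γ : ι → ι → ι → (ι → ℝ) → ℝ) (l i j k : ι) : (ι → ℝ) → ℝ :=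
  fun p => pd i (Γ l j k) p - pd j (Γ l i k) p +
    ∑ m, (Γ l i m p * Γ m j k p - Γ l j m p * Γ m i k p)

/-- Components `(∇ₕR)ˡᵢⱼₖ` of the covariant derivative of the curvature. -/
def covR (Γ : ι → ι → ι → (ι → ℝ) → ℝ) (h l i j k : ι) : (ι → ℝ) → ℝ :=
  fun p => pd h (curv Γ l i j k) p +
    ∑ m, (Γ l h m p * curv Γ m i j k p - Γ m h i p * curv Γ l m j k p
      - Γ m h j p * curv Γ l i m k p - Γ m h k p * curv Γ l i j m p)

/-- The Szabó operator `S(X) : Y ↦ (∇_X R)(Y,X)X` at the point `p`, as a matrix: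
`(S(X)Y)ˡ = Σ_{h,i,j,k} Xʰ Yⁱ Xʲ Xᵏ (∇ₕR)ˡᵢⱼₖ`. -/
def szabo (Γ : ι → ι → ι → (ι → ℝ) → ℝ) (p X : ι → ℝ) : Matrix ι ι ℝ :=
  Matrix.of fun l i => ∑ h, ∑ j, ∑ k, X h * X j * X k * covR Γ h l i j k p

/-- Ricci tensor `Ricⱼₖ = Σᵢ Rⁱᵢⱼₖ`. -/
def ricci (Γ : ι → ι → ι → (ι → ℝ) → ℝ) (j k : ι) : (ι → ℝ) → ℝ :=
  fun p => ∑ i, curv Γ i i j k p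

/-- Covariant derivative of the Ricci tensor,
`(∇ᵢRic)ⱼₖ = ∂ᵢRicⱼₖ − Σₘ (Γᵐᵢⱼ Ricₘₖ + Γᵐᵢₖ Ricⱼₘ)`. -/
def covRic (Γ : ι → ι → ι → (ι → ℝ) → ℝ) (i j k : ι) : (ι → ℝ) → ℝ :=
  fun p => pd i (ricci Γ j k) p -
    ∑ m, (Γ m i j p * ricci Γ m k p + Γ m i k p * ricci Γ j m p)

/-- The Ricci tensor is cyclic parallel at `p`. -/
def CyclicParallelAt (Γ : ι → ι → ι → (ι → ℝ) → ℝ) (p : ι → ℝ) : Prop :=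
  ∀ i j k, covRic Γ i j k p + covRic Γ j k i p + covRic Γ k i j p = 0

/-- Christoffel symbols `Γ̃ᶜₐᵦ = ½ Σ_d g̃ᶜᵈ (∂ₐ g̃ᵦ_d + ∂ᵦ g̃ₐ_d − ∂_d g̃ₐᵦ)` of the
Levi-Civita connection of a pseudo-Riemannian metric `g`. -/
def christoffel (g : (ι → ℝ) → Matrix ι ι ℝ) (c a b : ι) : (ι → ℝ) → ℝ :=
  fun p => (1 / 2) * ∑ d, (g p)⁻¹ c d *
    (pd a (fun q => g q b d) p + pd b (fun q => g q a d) p - pd d (fun q => g q a b) p)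

end

/-!
Tracing the Szabó operator contracts `∇R` to `∇Ric`, so nilpotency of `S(X)` gives
`Σ XᵃXᵇXᶜ (∇ₐRic)_bc = 0` for all `X`, and by polarization the full symmetrization of `∇Ric`
vanishes. For a torsion-free connection the skew part of the Ricci tensor is exact,
`Ric_jk − Ric_kj = ∂ₖω_j − ∂ⱼω_k` with `ω_j = Σₗ Γˡₗⱼ`, so by the symmetry of second partial
derivatives the cyclic sum of `∇Ric` is invariant under a transposition of its indices. It is
therefore half the full symmetrization, hence zero.
-/

section

variable {ι : Type} [Fintype ι] [DecidableEq ι]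

theorem contDiffAt_pd {m : WithTop ℕ∞} {f : (ι → ℝ) → ℝ} {p : ι → ℝ}
    (hf : ContDiffAt ℝ (m + 1) f p) (i : ι) : ContDiffAt ℝ m (pd i f) p :=
  (hf.fderiv_right le_rfl).clm_apply contDiffAt_const

theorem pd_comm {f : (ι → ℝ) → ℝ} {p : ι → ℝ} (hf : ContDiffAt ℝ 2 f p) (i j : ι) :
    pd i (pd j f) p = pd j (pd i f) p := by
  have hd : DifferentiableAt ℝ (fderiv ℝ f) p :=
    (hf.fderiv_right (m := 1) (by norm_num)).differentiableAt one_ne_zero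
  have hsecond : ∀ v w : ι → ℝ,
      fderiv ℝ (fun q => fderiv ℝ f q v) p w = fderiv ℝ (fderiv ℝ f) p w v := fun v w => by
    simp [fderiv_clm_apply hd (differentiableAt_const v)]
  unfold pd
  rw [hsecond, hsecond]
  exact hf.isSymmSndFDerivAt (by simp [minSmoothness_of_isRCLikeNormedField]) _ _

theorem pd_sub {f g : (ι → ℝ) → ℝ} {p : ι → ℝ} (hf : DifferentiableAt ℝ f p)
    (hg : DifferentiableAt ℝ g p) (i : ι) :
    pd i (fun q => f q - g q) p = pd i f p - pd i g p := by
  simp [pd, fderiv_fun_sub hf hg]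

theorem pd_sum {α : Type*} [Fintype α] {f : α → (ι → ℝ) → ℝ} {p : ι → ℝ}
    (hf : ∀ a, DifferentiableAt ℝ (f a) p) (i : ι) :
    pd i (fun q => ∑ a, f a q) p = ∑ a, pd i (f a) p := by
  simp [pd, fderiv_fun_sum (fun a _ => hf a)]

theorem Matrix.trace_eq_zero_of_charpoly_eq_X_pow {R : Type*} [CommRing R] {M : Matrix ι ι R}
    (h : M.charpoly = Polynomial.X ^ Fintype.card ι) : M.trace = 0 := by
  cases isEmpty_or_nonempty ι
  · exact M.trace_eq_zero_of_isEmpty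
  · rw [M.trace_eq_neg_charpoly_coeff, h, Polynomial.coeff_X_pow,
      if_neg (Nat.sub_one_lt Fintype.card_ne_zero).ne, neg_zero]

theorem sum_permutations_eq_zero_of_cubic_eq_zero {R : Type*} [CommRing R] {C : ι → ι → ι → R}
    (h : ∀ X : ι → R, ∑ a, ∑ b, ∑ c, X a * X b * X c * C a b c = 0) (i j k : ι) :
    C i j k + C i k j + C j i k + C j k i + C k i j + C k j i = 0 := by
  set T : (ι → R) → (ι → R) → (ι → R) → R :=
    fun x y z => ∑ a, ∑ b, ∑ c, x a * y b * z c * C a b c with hT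
  have hadd₁ : ∀ x y z w : ι → R, T (x + y) z w = T x z w + T y z w := fun x y z w => by
    simp [hT, add_mul, Finset.sum_add_distrib]
  have hadd₂ : ∀ x y z w : ι → R, T x (y + z) w = T x y w + T x z w := fun x y z w => by
    simp [hT, add_mul, mul_add, Finset.sum_add_distrib]
  have hadd₃ : ∀ x y z w : ι → R, T x y (z + w) = T x y z + T x y w := fun x y z w => by
    simp [hT, add_mul, mul_add, Finset.sum_add_distrib]
  have hsingle : ∀ a b c : ι, T (Pi.single a 1) (Pi.single b 1) (Pi.single c 1) = C a b c :=
    fun a b c => by simp [hT, Pi.single_apply, ite_mul]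
  -- inclusion–exclusion over the sub-sums of `x + y + z`
  have hpolar : ∀ x y z : ι → R,
      T x y z + T x z y + T y x z + T y z x + T z x y + T z y x
        = T (x + y + z) (x + y + z) (x + y + z) - T (x + y) (x + y) (x + y)
          - T (x + z) (x + z) (x + z) - T (y + z) (y + z) (y + z)
          + T x x x + T y y y + T z z z := fun x y z => by
    simp only [hadd₁, hadd₂, hadd₃]
    ring
  have hdiag : ∀ x, T x x x = 0 := h
  simpa only [hdiag, hsingle, sub_zero, add_zero] using
    hpolar (Pi.single i 1) (Pi.single j 1) (Pi.single k 1)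

variable {Γ : ι → ι → ι → (ι → ℝ) → ℝ} {p : ι → ℝ}

theorem contDiffAt_curv {m : WithTop ℕ∞} (hΓ : ∀ a b c, ContDiffAt ℝ (m + 1) (Γ a b c) p)
    (l i j k : ι) : ContDiffAt ℝ m (curv Γ l i j k) p := by
  have hΓm : ∀ a b c, ContDiffAt ℝ m (Γ a b c) p := fun a b c => (hΓ a b c).of_le le_self_add
  exact ((contDiffAt_pd (hΓ l j k) i).sub (contDiffAt_pd (hΓ l i k) j)).add <|
    .sum fun m _ => ((hΓm l i m).mul (hΓm m j k)).sub ((hΓm l j m).mul (hΓm m i k))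

theorem differentiableAt_curv (hΓ : ∀ a b c, ContDiffAt ℝ 2 (Γ a b c) p) (l i j k : ι) :
    DifferentiableAt ℝ (curv Γ l i j k) p :=
  (contDiffAt_curv (m := 1) hΓ l i j k).differentiableAt one_ne_zero

theorem differentiableAt_ricci (hΓ : ∀ a b c, ContDiffAt ℝ 2 (Γ a b c) p) (j k : ι) :
    DifferentiableAt ℝ (ricci Γ j k) p :=
  .fun_sum fun l _ => differentiableAt_curv hΓ l l j k

theorem sum_covR_self (hΓ : ∀ a b c, ContDiffAt ℝ 2 (Γ a b c) p) (h j k : ι) :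
    ∑ l, covR Γ h l l j k p = covRic Γ h j k p := by
  have hpd : ∑ l, pd h (curv Γ l l j k) p = pd h (ricci Γ j k) p :=
    (pd_sum (fun l => differentiableAt_curv hΓ l l j k) h).symm
  have hswap : ∑ l, ∑ m, Γ l h m p * curv Γ m l j k p
      = ∑ l, ∑ m, Γ m h l p * curv Γ l m j k p := Finset.sum_comm
  have hj : ∑ l, ∑ m, Γ m h j p * curv Γ l l m k p = ∑ m, Γ m h j p * ricci Γ m k p := by
    rw [Finset.sum_comm]; simp only [← Finset.mul_sum]; rfl
  have hk : ∑ l, ∑ m, Γ m h k p * curv Γ l l j m p = ∑ m, Γ m h k p * ricci Γ j m p := by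
    rw [Finset.sum_comm]; simp only [← Finset.mul_sum]; rfl
  simp only [covR, covRic, Finset.sum_sub_distrib, Finset.sum_add_distrib]
  rw [hpd, hswap, hj, hk]
  ring

theorem trace_szabo (hΓ : ∀ a b c, ContDiffAt ℝ 2 (Γ a b c) p) (X : ι → ℝ) :
    (szabo Γ p X).trace = ∑ a, ∑ b, ∑ c, X a * X b * X c * covRic Γ a b c p := by
  simp only [Matrix.trace, Matrix.diag, szabo, Matrix.of_apply, ← sum_covR_self hΓ,
    Finset.mul_sum]
  rw [Finset.sum_comm]
  refine Finset.sum_congr rfl fun a _ => ?_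
  rw [Finset.sum_comm]
  refine Finset.sum_congr rfl fun b _ => Finset.sum_comm

theorem ricci_sub_ricci_swap (hsym : ∀ a b c, Γ a b c = Γ a c b) (j k : ι) (q : ι → ℝ) :
    ricci Γ j k q - ricci Γ k j q = ∑ l, (pd k (Γ l l j) q - pd j (Γ l l k) q) := by
  have hquad : ∑ l, ∑ m, (Γ l k m q * Γ m l j q - Γ l j m q * Γ m l k q) = 0 := by
    simp only [Finset.sum_sub_distrib, sub_eq_zero]
    rw [Finset.sum_comm]
    refine Finset.sum_congr rfl fun l _ => Finset.sum_congr rfl fun m _ => ?_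
    rw [hsym m k l, hsym l m j]; ring
  have hcurv : ∀ l, curv Γ l l j k q - curv Γ l l k j q
      = pd k (Γ l l j) q - pd j (Γ l l k) q
        + ∑ m, (Γ l k m q * Γ m l j q - Γ l j m q * Γ m l k q) := fun l => by
    have hsum : ∑ m, (Γ l l m q * Γ m k j q - Γ l j m q * Γ m l k q)
          - ∑ m, (Γ l l m q * Γ m k j q - Γ l k m q * Γ m l j q)
        = ∑ m, (Γ l k m q * Γ m l j q - Γ l j m q * Γ m l k q) := by
      rw [← Finset.sum_sub_distrib]; exact Finset.sum_congr rfl fun m _ => by ring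
    simp only [curv, hsym l j k, hsym _ j k]
    linear_combination hsum
  simp only [ricci, ← Finset.sum_sub_distrib, hcurv, Finset.sum_add_distrib, hquad, add_zero]

theorem covRic_sub_covRic_swap (hΓ : ∀ a b c, ContDiffAt ℝ 2 (Γ a b c) p) (a b c : ι) :
    covRic Γ a b c p - covRic Γ a c b p
      = pd a (fun q => ricci Γ b c q - ricci Γ c b q) p
        - ∑ m, (Γ m a b p * (ricci Γ m c p - ricci Γ c m p)
          + Γ m a c p * (ricci Γ b m p - ricci Γ m b p)) := by
  have hsum : ∑ m, (Γ m a b p * ricci Γ m c p + Γ m a c p * ricci Γ b m p)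
        - ∑ m, (Γ m a c p * ricci Γ m b p + Γ m a b p * ricci Γ c m p)
      = ∑ m, (Γ m a b p * (ricci Γ m c p - ricci Γ c m p)
        + Γ m a c p * (ricci Γ b m p - ricci Γ m b p)) := by
    rw [← Finset.sum_sub_distrib]; exact Finset.sum_congr rfl fun m _ => by ring
  rw [covRic, covRic, pd_sub (differentiableAt_ricci hΓ b c) (differentiableAt_ricci hΓ c b)]
  linear_combination -hsum

theorem cyclic_pd_ricci_skew (hΓ : ∀ a b c, ContDiffAt ℝ 2 (Γ a b c) p)
    (hsym : ∀ a b c, Γ a b c = Γ a c b) (a b c : ι) :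
    pd a (fun q => ricci Γ b c q - ricci Γ c b q) p
      + pd b (fun q => ricci Γ c a q - ricci Γ a c q) p
      + pd c (fun q => ricci Γ a b q - ricci Γ b a q) p = 0 := by
  have hdpd : ∀ l a b, DifferentiableAt ℝ (pd b (Γ l l a)) p := fun l a b =>
    (contDiffAt_pd (m := 1) (hΓ l l a) b).differentiableAt one_ne_zero
  have hpd : ∀ a b c, pd a (fun q => ricci Γ b c q - ricci Γ c b q) p
      = ∑ l, (pd a (pd c (Γ l l b)) p - pd a (pd b (Γ l l c)) p) := fun a b c => by
    simp only [ricci_sub_ricci_swap hsym]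
    rw [pd_sum (f := fun l q => pd c (Γ l l b) q - pd b (Γ l l c) q)
      (fun l => (hdpd l b c).sub (hdpd l c b))]
    exact Finset.sum_congr rfl fun l _ => pd_sub (hdpd l b c) (hdpd l c b) a
  simp only [hpd, ← Finset.sum_add_distrib]
  refine Finset.sum_eq_zero fun l _ => ?_
  rw [pd_comm (hΓ l l b) a c, pd_comm (hΓ l l c) a b, pd_comm (hΓ l l a) b c]
  ring

theorem cyclic_covRic_eq_cyclic_covRic_swap (hΓ : ∀ a b c, ContDiffAt ℝ 2 (Γ a b c) p)
    (hsym : ∀ a b c, Γ a b c = Γ a c b) (i j k : ι) :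
    covRic Γ i j k p + covRic Γ j k i p + covRic Γ k i j p
      = covRic Γ i k j p + covRic Γ j i k p + covRic Γ k j i p := by
  have hΓ_terms : ∑ m, (Γ m i j p * (ricci Γ m k p - ricci Γ k m p)
        + Γ m i k p * (ricci Γ j m p - ricci Γ m j p))
      + ∑ m, (Γ m j k p * (ricci Γ m i p - ricci Γ i m p)
        + Γ m j i p * (ricci Γ k m p - ricci Γ m k p))
      + ∑ m, (Γ m k i p * (ricci Γ m j p - ricci Γ j m p)
        + Γ m k j p * (ricci Γ i m p - ricci Γ m i p)) = 0 := by
    rw [← Finset.sum_add_distrib, ← Finset.sum_add_distrib]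
    refine Finset.sum_eq_zero fun m _ => ?_
    rw [hsym m j i, hsym m k i, hsym m k j]
    ring
  linear_combination covRic_sub_covRic_swap hΓ i j k + covRic_sub_covRic_swap hΓ j k i
    + covRic_sub_covRic_swap hΓ k i j + cyclic_pd_ricci_skew hΓ hsym i j k - hΓ_terms

theorem cyclicParallelAt_of_trace_szabo_eq_zero (hΓ : ∀ a b c, ContDiffAt ℝ 2 (Γ a b c) p)
    (hsym : ∀ a b c, Γ a b c = Γ a c b) (htr : ∀ X, (szabo Γ p X).trace = 0) :
    CyclicParallelAt Γ p := fun i j k => by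
  have hsymm := sum_permutations_eq_zero_of_cubic_eq_zero
    (fun X => (trace_szabo hΓ X).symm.trans (htr X)) i j k
  linear_combination hsymm / 2 + cyclic_covRic_eq_cyclic_covRic_swap hΓ hsym i j k / 2

end

/-- if a torsion-free affine connection on an open set `U ⊆ ℝⁿ` with smooth
Christoffel symbols is affine Szabó at `p ∈ U` (the characteristic polynomial of the affine
Szabó operator `S(X)` is `λⁿ` for every `X`), then its Ricci tensor is cyclic parallel at `p`. -/
theorem stmt_1 (n : ℕ) (U : Set (Fin n → ℝ)) (hU : IsOpen U)
    (Γ : Fin n → Fin n → Fin n → (Fin n → ℝ) → ℝ)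
    (hsmooth : ∀ k i j, ContDiffOn ℝ (⊤ : ℕ∞) (Γ k i j) U)
    (hsym : ∀ k i j, Γ k i j = Γ k j i)
    (p : Fin n → ℝ) (hp : p ∈ U)
    (hszabo : ∀ X : Fin n → ℝ, (szabo Γ p X).charpoly = Polynomial.X ^ n) :
    CyclicParallelAt Γ p := by
  have hΓ : ∀ a b c, ContDiffAt ℝ 2 (Γ a b c) p := fun a b c =>
    ((hsmooth a b c).contDiffAt (hU.mem_nhds hp)).of_le (WithTop.coe_le_coe.mpr le_top)
  refine cyclicParallelAt_of_trace_szabo_eq_zero hΓ hsym fun X => ?_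
  exact Matrix.trace_eq_zero_of_charpoly_eq_X_pow (by rw [hszabo, Fintype.card_fin])
end

section
/- Let ∇ be the torsion-free affine connection on ℝ³ whose only nonzero Christoffel symbols are Γ²₁₁ = f₁, Γ²₂₂ = f₂, Γ²₃₃ = f₃ for smooth functions f₁, f₂, f₃ : ℝ³ → ℝ. If the Ricci tensor of ∇ is cyclic parallel at every point of ℝ³, then the following nine identities hold on ℝ³: ∂₁∂₃f₂ = 0; ∂₁∂₂f₂ − f₂∂₁f₂ = 0; ∂₃∂₂f₂ − f₂∂₃f₂ = 0; ∂₁∂₂f₁ + 2f₁∂₁f₂ + f₂∂₁f₁ = 0; ∂₂∂₃f₃ + 2f₃∂₃f₂ + f₂∂₃f₃ = 0; ∂₂∂₃f₁ + 2f₁∂₃f₂ + f₂∂₃f₁ = 0; ∂₂∂₁f₃ + 2f₃∂₁f₂ + f₂∂₁f₃ = 0; ∂₂²f₁ + f₁∂₂f₂ + f₂∂₂f₁ − ∂₁²f₂ = 0; ∂₂²f₃ + f₃∂₂f₂ + f₂∂₂f₃ − ∂₃²f₂ = 0. -/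
open scoped BigOperators

/-- The torsion-free connection on `ℝ³` whose only nonzero Christoffel symbols are
`Γ²₁₁ = f₁`, `Γ²₂₂ = f₂`, `Γ²₃₃ = f₃` (indices `1,2,3` are `0,1,2` in `Fin 3`). -/
def gammaF (f₁ f₂ f₃ : (Fin 3 → ℝ) → ℝ) : Fin 3 → Fin 3 → Fin 3 → (Fin 3 → ℝ) → ℝ :=
  fun k i j =>
    if k = 1 ∧ i = 0 ∧ j = 0 then f₁
    else if k = 1 ∧ i = 1 ∧ j = 1 then f₂
    else if k = 1 ∧ i = 2 ∧ j = 2 then f₃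
    else 0

/-!
All Christoffel symbols have upper index 2, so the only nonzero Ricci components are
`Ric₁₁ = ∂₂f₁ + f₁f₂`, `Ric₁₂ = −∂₁f₂`, `Ric₃₂ = −∂₃f₂` and `Ric₃₃ = ∂₂f₃ + f₂f₃`.
Each of the nine identities is then, up to a constant factor and the symmetry of second
partial derivatives, the cyclic sum of `∇Ric` at one index triple.
-/

section PartialDerivative

variable {ι : Type} [DecidableEq ι] {f g : (ι → ℝ) → ℝ} {p : ι → ℝ}

lemma pd_zero (i : ι) (p : ι → ℝ) : pd i (0 : (ι → ℝ) → ℝ) p = 0 := by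
  simp [pd]

variable [Fintype ι]

lemma pd_neg (i : ι) : pd i (-f) p = -pd i f p := by
  simp [pd, fderiv_neg]

lemma pd_add (i : ι) (hf : DifferentiableAt ℝ f p) (hg : DifferentiableAt ℝ g p) :
    pd i (f + g) p = pd i f p + pd i g p := by
  simp [pd, fderiv_add hf hg]

lemma pd_mul (i : ι) (hf : DifferentiableAt ℝ f p) (hg : DifferentiableAt ℝ g p) :
    pd i (f * g) p = pd i f p * g p + f p * pd i g p := by
  simp [pd, fderiv_mul hf hg, add_comm, mul_comm]

lemma ContDiffAt.differentiableAt_pd (hf : ContDiffAt ℝ 2 f p) (i : ι) :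
    DifferentiableAt ℝ (pd i f) p :=
  ((hf.fderiv_right (m := 1) le_rfl).differentiableAt one_ne_zero).clm_apply
    (differentiableAt_const _)

lemma pd_pd_comm (hf : ContDiffAt ℝ 2 f p) (i j : ι) :
    pd i (pd j f) p = pd j (pd i f) p := by
  have hd : DifferentiableAt ℝ (fderiv ℝ f) p :=
    (hf.fderiv_right (m := 1) le_rfl).differentiableAt one_ne_zero
  have hpd : ∀ a w, fderiv ℝ (pd a f) p w = fderiv ℝ (fderiv ℝ f) p w (Pi.single a 1) := by
    intro a w
    change fderiv ℝ (fun q => fderiv ℝ f q (Pi.single a 1)) p w = _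
    simp [fderiv_clm_apply hd (differentiableAt_const _)]
  have hsymm : IsSymmSndFDerivAt ℝ f p :=
    hf.isSymmSndFDerivAt (by simp [minSmoothness_of_isRCLikeNormedField])
  change fderiv ℝ (pd j f) p (Pi.single i 1) = fderiv ℝ (pd i f) p (Pi.single j 1)
  rw [hpd, hpd, hsymm]

end PartialDerivative

section Ricci

variable (f₁ f₂ f₃ : (Fin 3 → ℝ) → ℝ)

lemma ricci_gammaF : ricci (gammaF f₁ f₂ f₃) =
    ![![pd 1 f₁ + f₁ * f₂, -pd 0 f₂, 0],
      ![0, 0, 0],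
      ![0, -pd 2 f₂, pd 1 f₃ + f₂ * f₃]] := by
  funext j k p
  fin_cases j <;> fin_cases k <;>
    simp [ricci, curv, gammaF, Fin.sum_univ_three, pd_zero, mul_comm]

variable {f₁ f₂ f₃} {p : Fin 3 → ℝ}

lemma pd_ricci_gammaF (h₁ : ContDiffAt ℝ 2 f₁ p) (h₂ : DifferentiableAt ℝ f₂ p)
    (h₃ : ContDiffAt ℝ 2 f₃ p) (i j k : Fin 3) :
    pd i (ricci (gammaF f₁ f₂ f₃) j k) p =
      ![![pd i (pd 1 f₁) p + (pd i f₁ p * f₂ p + f₁ p * pd i f₂ p), -pd i (pd 0 f₂) p, 0],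
        ![0, 0, 0],
        ![0, -pd i (pd 2 f₂) p, pd i (pd 1 f₃) p + (pd i f₂ p * f₃ p + f₂ p * pd i f₃ p)]]
        j k := by
  have d₁ := h₁.differentiableAt two_ne_zero
  have d₃ := h₃.differentiableAt two_ne_zero
  rw [ricci_gammaF]
  fin_cases j <;> fin_cases k <;>
    simp [pd_zero, pd_neg, pd_add, pd_mul, d₁, h₂, d₃, h₁.differentiableAt_pd,
      h₃.differentiableAt_pd, DifferentiableAt.mul]

end Ricci

/-- if the Ricci tensor of the connection with `Γ²₁₁ = f₁`, `Γ²₂₂ = f₂`,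
`Γ²₃₃ = f₃` is cyclic parallel at every point of `ℝ³`, then the nine stated identities
hold on `ℝ³`. -/
theorem stmt_4 (f₁ f₂ f₃ : (Fin 3 → ℝ) → ℝ)
    (hsmooth₁ : ContDiff ℝ (⊤ : ℕ∞) f₁) (hsmooth₂ : ContDiff ℝ (⊤ : ℕ∞) f₂)
    (hsmooth₃ : ContDiff ℝ (⊤ : ℕ∞) f₃)
    (hcp : ∀ p : Fin 3 → ℝ, CyclicParallelAt (gammaF f₁ f₂ f₃) p) :
    ∀ p : Fin 3 → ℝ,
      pd 0 (pd 2 f₂) p = 0 ∧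
      pd 0 (pd 1 f₂) p - f₂ p * pd 0 f₂ p = 0 ∧
      pd 2 (pd 1 f₂) p - f₂ p * pd 2 f₂ p = 0 ∧
      pd 0 (pd 1 f₁) p + 2 * f₁ p * pd 0 f₂ p + f₂ p * pd 0 f₁ p = 0 ∧
      pd 1 (pd 2 f₃) p + 2 * f₃ p * pd 2 f₂ p + f₂ p * pd 2 f₃ p = 0 ∧
      pd 1 (pd 2 f₁) p + 2 * f₁ p * pd 2 f₂ p + f₂ p * pd 2 f₁ p = 0 ∧
      pd 1 (pd 0 f₃) p + 2 * f₃ p * pd 0 f₂ p + f₂ p * pd 0 f₃ p = 0 ∧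
      pd 1 (pd 1 f₁) p + f₁ p * pd 1 f₂ p + f₂ p * pd 1 f₁ p - pd 0 (pd 0 f₂) p = 0 ∧
      pd 1 (pd 1 f₃) p + f₃ p * pd 1 f₂ p + f₂ p * pd 1 f₃ p - pd 2 (pd 2 f₂) p = 0 := by
  intro p
  have hC2 : ∀ f : (Fin 3 → ℝ) → ℝ, ContDiff ℝ (⊤ : ℕ∞) f → ContDiffAt ℝ 2 f p :=
    fun f hf => (hf.of_le (WithTop.coe_le_coe.mpr le_top)).contDiffAt
  have h₁ := hC2 f₁ hsmooth₁
  have h₂ := hC2 f₂ hsmooth₂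
  have h₃ := hC2 f₃ hsmooth₃
  have c012 := hcp p 0 1 2
  have c011 := hcp p 0 1 1
  have c112 := hcp p 1 1 2
  have c000 := hcp p 0 0 0
  have c222 := hcp p 2 2 2
  have c002 := hcp p 0 0 2
  have c022 := hcp p 0 2 2
  have c001 := hcp p 0 0 1
  have c122 := hcp p 1 2 2
  simp only [covRic, pd_ricci_gammaF h₁ (h₂.differentiableAt two_ne_zero) h₃]
    at c012 c011 c112 c000 c222 c002 c022 c001 c122
  simp only [Nat.succ_eq_add_one, Nat.reduceAdd, Fin.isValue, Matrix.cons_val', Matrix.cons_val,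
    Matrix.cons_val_fin_one, Matrix.cons_val_one, Matrix.cons_val_zero, gammaF, one_ne_zero,
    and_false, ↓reduceIte, zero_ne_one, and_true, Fin.reduceEq, and_self, Pi.zero_apply,
    ricci_gammaF, Pi.add_apply, Pi.mul_apply, zero_mul, Pi.neg_apply, add_zero,
    Finset.sum_const_zero, sub_self, sub_zero, zero_add, neg_eq_zero, Fin.sum_univ_three,
    mul_zero, mul_neg, sub_neg_eq_add, neg_zero] at c012 c011 c112 c000 c222 c002 c022 c001 c122
  exact ⟨by linear_combination pd_pd_comm h₂ 0 2 + c012,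
    by linear_combination pd_pd_comm h₂ 0 1 - c011,
    by linear_combination pd_pd_comm h₂ 2 1 - c112,
    by linear_combination c000 / 3,
    by linear_combination pd_pd_comm h₃ 1 2 + c222 / 3,
    by linear_combination pd_pd_comm h₁ 1 2 + c002,
    by linear_combination pd_pd_comm h₃ 1 0 + c022,
    by linear_combination c001,
    by linear_combination c122⟩
end
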